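/- arXiv:1304.8025 — 2 statements merged into one kernel-verified Lean document; each statement's English description precedes it below -/
import Mathlib

section
/- Let N : [0,T] → (0,∞) be continuous with N(0) = 1, and suppose that for every t₀ ∈ [0,T] there holds δ/N(t₀)³ ≤ C ∫_{t₀}^{min(t₀+δ/N(t₀)³, T)} N(t)² dt for fixed constants δ, C > 0 (whenever t₀ + δ/N(t₀)³ ≤ T). Then T ≲ (∫_0^T N(t)² dt)³, i.e., there is a constant C' = C'(δ, C) with T ≤ C' (∫_0^T N(t)² dt)³, provided ∫_0^T N(t)² dt ≥ δ. -/
open intervalIntegral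

/-- Covering argument: if each interval `[t₀, t₀ + δ/N(t₀)³] ⊆ [0,T]` has
length at most `C` times the integral of `N²` over it, then
`T ≤ C' (∫_0^T N²)³` with `C'` depending only on `δ` and `C`. -/
theorem covering_time_bound (δ C : ℝ) (hδ : 0 < δ) (hC : 0 < C) :
    ∃ C' > (0 : ℝ), ∀ (T : ℝ) (N : ℝ → ℝ), 0 ≤ T →
      ContinuousOn N (Set.Icc 0 T) → (∀ t ∈ Set.Icc (0 : ℝ) T, 0 < N t) →
      N 0 = 1 →
      (∀ t₀ ∈ Set.Icc (0 : ℝ) T, t₀ + δ / (N t₀) ^ 3 ≤ T →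
        δ / (N t₀) ^ 3 ≤ C * ∫ t in t₀..(t₀ + δ / (N t₀) ^ 3), (N t) ^ 2) →
      δ ≤ (∫ t in (0 : ℝ)..T, (N t) ^ 2) →
      T ≤ C' * (∫ t in (0 : ℝ)..T, (N t) ^ 2) ^ 3 := by
  refine ⟨(2 * C + 2) / δ ^ 2, by positivity, ?_⟩
  intro T N hT hcont hpos hN0 hyp hI
  set I := ∫ t in (0 : ℝ)..T, (N t) ^ 2 with hIdef
  have hIpos : 0 < I := lt_of_lt_of_le hδ hI
  clear_value I
  -- integrability of N² on [0,T]
  have hNsq : ContinuousOn (fun t => (N t) ^ 2) (Set.Icc 0 T) := hcont.pow 2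
  have hint : IntervalIntegrable (fun t => (N t) ^ 2) MeasureTheory.volume 0 T := by
    apply ContinuousOn.intervalIntegrable
    rwa [Set.uIcc_of_le hT]
  -- sub-intervals have integral ≤ I
  have key : ∀ a b : ℝ, 0 ≤ a → a ≤ b → b ≤ T →
      (∫ t in a..b, (N t) ^ 2) ≤ I := by
    intro a b h1 h2 h3
    rw [hIdef]
    exact intervalIntegral.integral_mono_interval h1 h2 h3
      (Filter.Eventually.of_forall fun x => sq_nonneg _) hint
  -- every fitting point t has δ/(N t)³ ≤ C·I
  have hfit : ∀ t ∈ Set.Icc (0 : ℝ) T, t + δ / (N t) ^ 3 ≤ T →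
      δ / (N t) ^ 3 ≤ C * I := by
    intro t ht hft
    refine (hyp t ht hft).trans ?_
    have hNt : 0 < N t := hpos t ht
    have hle : (∫ s in t..(t + δ / (N t) ^ 3), (N s) ^ 2) ≤ I :=
      key t _ ht.1 (le_add_of_nonneg_right (by positivity)) hft
    exact mul_le_mul_of_nonneg_left hle hC.le
  -- the set of "non-fitting or boundary" points
  set S : Set ℝ := {t | t ∈ Set.Icc (0 : ℝ) T ∧ T ≤ t + δ / (N t) ^ 3} with hSdef
  have hfc : ContinuousOn (fun t => t + δ / (N t) ^ 3) (Set.Icc 0 T) := by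
    apply continuousOn_id.add
    exact continuousOn_const.div (hcont.pow 3)
      (fun t ht => pow_ne_zero 3 (hpos t ht).ne')
  have hSclosed : IsClosed S := by
    have : S = Set.Icc 0 T ∩ (fun t => t + δ / (N t) ^ 3) ⁻¹' Set.Ici T := by
      ext t; simp [hSdef, Set.mem_setOf_eq, and_comm]
    rw [this]
    exact hfc.preimage_isClosed_of_isClosed isClosed_Icc isClosed_Ici
  have hScompact : IsCompact S :=
    isCompact_Icc.of_isClosed_subset hSclosed (fun t ht => ht.1)
  have hSne : S.Nonempty := by
    refine ⟨T, ⟨hT, le_rfl⟩, ?_⟩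
    have hNT : 0 < N T := hpos T ⟨hT, le_rfl⟩
    have : 0 ≤ δ / (N T) ^ 3 := by positivity
    linarith
  set u : ℝ := sInf S with hudef
  have huS : u ∈ S := hScompact.sInf_mem hSne
  have hu0 : 0 ≤ u := huS.1.1
  have huT : u ≤ T := huS.1.2
  -- points strictly below u fit strictly
  have hbefore : ∀ t, 0 ≤ t → t < u → t + δ / (N t) ^ 3 < T := by
    intro t ht0 htu
    have htT : t ≤ T := le_trans htu.le huT
    have hnot : t ∉ S := notMem_of_lt_csInf htu ⟨0, fun x hx => hx.1.1⟩
    by_contra hcon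
    push_neg at hcon
    exact hnot ⟨⟨ht0, htT⟩, hcon⟩
  clear_value u
  rcases eq_or_lt_of_le hu0 with hu | hu
  · -- u = 0 : T ≤ δ/N(0)³ = δ
    have hTδ : T ≤ δ := by
      have := huS.2
      rw [← hu, hN0] at this
      simpa using this
    have hδ3 : δ ^ 3 ≤ I ^ 3 := pow_le_pow_left₀ hδ.le hI 3
    rw [div_mul_eq_mul_div, le_div_iff₀ (by positivity)]
    nlinarith [mul_le_mul_of_nonneg_right hTδ (sq_nonneg δ), hδ3,
      pow_pos hIpos 3, mul_pos hC (pow_pos hIpos 3)]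
  · -- u > 0
    -- by continuity, u + δ/N(u)³ = T, so the hypothesis applies at u
    have hclos : u ∈ closure (Set.Ico 0 u) := by
      rw [closure_Ico (ne_of_lt hu)]
      exact ⟨hu0, le_rfl⟩
    have hne : (nhdsWithin u (Set.Ico 0 u)).NeBot :=
      mem_closure_iff_nhdsWithin_neBot.mp hclos
    have hsub : Set.Ico 0 u ⊆ Set.Icc 0 T :=
      fun t ht => ⟨ht.1, le_trans ht.2.le huT⟩
    have htends : Filter.Tendsto (fun t => t + δ / (N t) ^ 3)
        (nhdsWithin u (Set.Ico 0 u)) (nhds (u + δ / (N u) ^ 3)) :=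
      (hfc u huS.1).mono_left (nhdsWithin_mono u hsub)
    have hufit : u + δ / (N u) ^ 3 ≤ T := by
      refine le_of_tendsto htends ?_
      exact Filter.eventually_of_mem self_mem_nhdsWithin
        (fun t ht => (hbefore t ht.1 ht.2).le)
    have htail : δ / (N u) ^ 3 ≤ C * I := hfit u huS.1 hufit
    -- bound u itself: u ≤ (C+1)/δ² · I³
    set B : ℝ := (C + 1) / δ ^ 2 * I ^ 3 with hBdef
    have hB0 : 0 ≤ B := by positivity
    clear_value B
    have hub : u ≤ B := by
      by_contra hcon
      push_neg at hcon
      set v : ℝ := (B + u) / 2 with hvdef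
      have hv0 : 0 ≤ v := by rw [hvdef]; linarith
      have hvu : v < u := by rw [hvdef]; linarith
      have hvB : B < v := by rw [hvdef]; linarith
      clear_value v
      have hvT : v ≤ T := le_trans hvu.le huT
      -- min of N on [0,v]
      obtain ⟨t₁, ht₁mem, ht₁min⟩ :=
        isCompact_Icc.exists_isMinOn (Set.nonempty_Icc.2 hv0)
          (hcont.mono (Set.Icc_subset_Icc le_rfl hvT))
      set m : ℝ := N t₁ with hmdef
      have ht₁T : t₁ ∈ Set.Icc (0 : ℝ) T := ⟨ht₁mem.1, le_trans ht₁mem.2 hvT⟩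
      have hm : 0 < m := hpos t₁ ht₁T
      clear_value m
      have ht₁u : t₁ < u := lt_of_le_of_lt ht₁mem.2 hvu
      -- t₁ fits, so δ ≤ C·I·m³
      have hfitm : δ / m ^ 3 ≤ C * I := by
        rw [hmdef]; exact hfit t₁ ht₁T (hbefore t₁ ht₁mem.1 ht₁u).le
      have hδm : δ ≤ C * I * m ^ 3 := by
        rw [div_le_iff₀ (by positivity)] at hfitm
        linarith [hfitm]
      -- v·m² ≤ ∫₀ᵛ N² ≤ I
      have hintv : IntervalIntegrable (fun t => (N t) ^ 2) MeasureTheory.volume 0 v := by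
        apply hint.mono_set
        rw [Set.uIcc_of_le hv0, Set.uIcc_of_le hT]
        exact Set.Icc_subset_Icc le_rfl hvT
      have hlow : v * m ^ 2 ≤ ∫ t in (0 : ℝ)..v, (N t) ^ 2 := by
        have h1 : (∫ t in (0 : ℝ)..v, m ^ 2) ≤ ∫ t in (0 : ℝ)..v, (N t) ^ 2 := by
          apply intervalIntegral.integral_mono_on hv0 intervalIntegrable_const hintv
          intro x hx
          have hmx : m ≤ N x := by rw [hmdef]; exact ht₁min hx
          exact pow_le_pow_left₀ hm.le hmx 2
        rwa [intervalIntegral.integral_const, smul_eq_mul, sub_zero] at h1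
      have hvI : v * m ^ 2 ≤ I := hlow.trans (key 0 v le_rfl hv0 hvT)
      -- cube and combine
      have h1 : (v * m ^ 2) ^ 3 ≤ I ^ 3 :=
        pow_le_pow_left₀ (by positivity) hvI 3
      have h2 : δ ^ 2 ≤ (C * I * m ^ 3) ^ 2 := pow_le_pow_left₀ hδ.le hδm 2
      have h1' : v ^ 3 * m ^ 6 ≤ I ^ 3 := by
        calc v ^ 3 * m ^ 6 = (v * m ^ 2) ^ 3 := by ring
        _ ≤ I ^ 3 := h1
      have h3 : v ^ 3 * δ ^ 2 ≤ C ^ 2 * I ^ 5 := by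
        calc v ^ 3 * δ ^ 2 ≤ v ^ 3 * (C * I * m ^ 3) ^ 2 :=
              mul_le_mul_of_nonneg_left h2 (pow_nonneg hv0 3)
        _ = (C ^ 2 * I ^ 2) * (v ^ 3 * m ^ 6) := by ring
        _ ≤ (C ^ 2 * I ^ 2) * I ^ 3 :=
              mul_le_mul_of_nonneg_left h1' (by positivity)
        _ = C ^ 2 * I ^ 5 := by ring
      have hδ4 : δ ^ 4 ≤ I ^ 4 := pow_le_pow_left₀ hδ.le hI 4
      have a1 : v ^ 3 * δ ^ 6 ≤ C ^ 2 * I ^ 5 * δ ^ 4 := by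
        calc v ^ 3 * δ ^ 6 = (v ^ 3 * δ ^ 2) * δ ^ 4 := by ring
        _ ≤ (C ^ 2 * I ^ 5) * δ ^ 4 :=
              mul_le_mul_of_nonneg_right h3 (by positivity)
      have a2 : C ^ 2 * I ^ 5 * δ ^ 4 ≤ C ^ 2 * I ^ 9 := by
        calc C ^ 2 * I ^ 5 * δ ^ 4 ≤ C ^ 2 * I ^ 5 * I ^ 4 :=
              mul_le_mul_of_nonneg_left hδ4 (by positivity)
        _ = C ^ 2 * I ^ 9 := by ring
      have a3 : C ^ 2 * I ^ 9 ≤ (C + 1) ^ 3 * I ^ 9 := by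
        have hCC : C ^ 2 ≤ (C + 1) ^ 3 := by nlinarith [mul_pos hC hC, mul_pos (mul_pos hC hC) hC]
        exact mul_le_mul_of_nonneg_right hCC (pow_nonneg hIpos.le 9)
      have h5 : v ^ 3 * δ ^ 6 ≤ (C + 1) ^ 3 * I ^ 9 := le_trans a1 (le_trans a2 a3)
      have h6 : v ^ 3 ≤ B ^ 3 := by
        have hBcube : B ^ 3 = (C + 1) ^ 3 * I ^ 9 / δ ^ 6 := by
          rw [hBdef]; field_simp
        rw [hBcube, le_div_iff₀ (by positivity)]
        linarith [h5]
      have : v ≤ B := le_of_pow_le_pow_left₀ (by norm_num) hB0 h6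
      linarith
    -- conclude
    have htail' : T - u ≤ C * I := by linarith [htail, huS.2]
    have hCI : C * I ≤ (C + 1) / δ ^ 2 * I ^ 3 := by
      rw [div_mul_eq_mul_div, le_div_iff₀ (by positivity)]
      have hδ2 : δ ^ 2 ≤ I ^ 2 := pow_le_pow_left₀ hδ.le hI 2
      calc C * I * δ ^ 2 ≤ C * I * I ^ 2 :=
            mul_le_mul_of_nonneg_left hδ2 (by positivity)
      _ = C * I ^ 3 := by ring
      _ ≤ (C + 1) * I ^ 3 := by nlinarith [pow_pos hIpos 3]
    have hsplit : (2 * C + 2) / δ ^ 2 * I ^ 3 = B + (C + 1) / δ ^ 2 * I ^ 3 := by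
      rw [hBdef]; ring
    rw [hsplit]
    linarith [hub, htail', hCI]
end

section
/- Let S : [A₀, ∞) → [0,∞) satisfy S(A) ≤ C(A^{-σ} + ε⁴ S(A/32) + K A^{-1/6} S(A/32)) for all A ≥ 32·A₀, with S(A) ≤ ε for A₀ ≤ A ≤ 32A₀, where 0 ≤ σ ≤ 1/12 and C, K > 0. Then there exist ε₀ = ε₀(C, K, σ, A₀) > 0 and C' such that if ε ≤ ε₀ then S(A) ≤ C' A^{-σ} for all A ≥ A₀. -/
set_option maxHeartbeats 1000000

open Real

/-- Pure arithmetic core of the inductive step. -/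
private lemma bootstrap_arith (C K P C' s t X EA SB SA ε : ℝ)
    (hC : 0 < C) (hK : 0 < K) (hP : 0 < P) (hC' : 0 < C') (hs : 0 < s)
    (ht : 0 < t) (hX : 0 < X) (hSB : 0 ≤ SB)
    (hrec : SA ≤ C * (s + ε ^ 4 * SB + K * t * SB))
    (hIH : SB ≤ C' * (s * P) * X)
    (hεP : C * ε ^ 4 * P ≤ 1 / 2)
    (hCX : 2 * C ≤ C' * X)
    (hEA : X * (1 + C * P * K * t) ≤ EA) :
    SA ≤ C' * s * EA := by
  have hε4 : (0:ℝ) ≤ ε ^ 4 := by positivity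
  have h1 : ε ^ 4 * SB ≤ ε ^ 4 * (C' * (s * P) * X) :=
    mul_le_mul_of_nonneg_left hIH hε4
  have h2 : K * t * SB ≤ K * t * (C' * (s * P) * X) :=
    mul_le_mul_of_nonneg_left hIH (by positivity)
  have h3 : SA ≤ C * (s + ε ^ 4 * (C' * (s * P) * X) + K * t * (C' * (s * P) * X)) := by
    have := mul_le_mul_of_nonneg_left (add_le_add (add_le_add_left h1 s) h2) hC.le
    linarith
  have h4 : C * (ε ^ 4 * (C' * (s * P) * X)) = (C * ε ^ 4 * P) * (C' * s * X) := by ring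
  have h5 : (C * ε ^ 4 * P) * (C' * s * X) ≤ (1/2) * (C' * s * X) :=
    mul_le_mul_of_nonneg_right hεP (by positivity)
  have h6 : C * s ≤ (1/2) * (C' * s * X) := by
    have := mul_le_mul_of_nonneg_right hCX hs.le
    nlinarith
  have h7 : SA ≤ C' * s * X + C' * s * X * (C * P * K * t) := by nlinarith
  have h8 : C' * s * (X * (1 + C * P * K * t)) ≤ C' * s * EA :=
    mul_le_mul_of_nonneg_left hEA (by positivity)
  nlinarith

/-- Induction-on-frequency bootstrap (5.71)–(5.72): a nonnegative function
satisfying `S(A) ≤ C(A^{-σ} + ε⁴ S(A/32) + K A^{-1/6} S(A/32))` for `A ≥ 32A₀`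
and `S ≤ ε` on `[A₀, 32A₀]` decays like `A^{-σ}`, provided `ε` is small. -/
theorem frequency_bootstrap
    (C K σ A₀ : ℝ) (hC : 0 < C) (hK : 0 < K) (hσ0 : 0 ≤ σ) (hσ : σ ≤ 1 / 12)
    (hA₀ : 0 < A₀) :
    ∃ ε₀ > (0 : ℝ), ∃ C' > (0 : ℝ), ∀ (ε : ℝ) (S : ℝ → ℝ),
      0 < ε → ε ≤ ε₀ →
      (∀ A : ℝ, A₀ ≤ A → 0 ≤ S A) →
      (∀ A : ℝ, 32 * A₀ ≤ A →
        S A ≤ C * (A ^ (-σ) + ε ^ 4 * S (A / 32) + K * A ^ (-(1 : ℝ) / 6) * S (A / 32))) →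
      (∀ A : ℝ, A₀ ≤ A → A ≤ 32 * A₀ → S A ≤ ε) →
      ∀ A : ℝ, A₀ ≤ A → S A ≤ C' * A ^ (-σ) := by
  have hP : (0:ℝ) < (32:ℝ) ^ σ := rpow_pos_of_pos (by norm_num) σ
  set P : ℝ := (32:ℝ) ^ σ with hP_def
  have hrgt : (1:ℝ) < (32:ℝ) ^ ((1:ℝ)/6) := by
    have := Real.one_lt_rpow_iff_of_pos (x := (32:ℝ)) (y := (1:ℝ)/6) (by norm_num)
    rw [this]; norm_num
  set r : ℝ := (32:ℝ) ^ ((1:ℝ)/6) with hr_def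
  have hrpos : (0:ℝ) < r := lt_trans one_pos hrgt
  have hcr : (0:ℝ) < r - 1 := sub_pos.mpr hrgt
  set lam : ℝ := C * P * K / (r - 1) with hlam_def
  have hlam : 0 < lam := by positivity
  have ht0 : (0:ℝ) < A₀ ^ (-(1:ℝ)/6) := rpow_pos_of_pos hA₀ _
  set m : ℝ := Real.exp (-(lam * r * A₀ ^ (-(1:ℝ)/6))) with hm_def
  have hm : 0 < m := exp_pos _
  have h32A₀ : (0:ℝ) < 32 * A₀ := by linarith
  have hQ : (0:ℝ) < (32*A₀) ^ σ := rpow_pos_of_pos h32A₀ σ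
  set C' : ℝ := ((32*A₀) ^ σ + 2*C) / m with hC'_def
  have hC' : 0 < C' := by positivity
  have hC'm : C' * m = (32*A₀) ^ σ + 2*C := div_mul_cancel₀ _ (ne_of_gt hm)
  refine ⟨min 1 (1/(2*C*P)), by positivity, C', hC', ?_⟩
  intro ε S hε hεle hS0 hrec hbase
  have hε1 : ε ≤ 1 := le_trans hεle (min_le_left _ _)
  have hε2 : ε ≤ 1/(2*C*P) := le_trans hεle (min_le_right _ _)
  have hεP : C * ε ^ 4 * P ≤ 1/2 := by
    have h2CP : (0:ℝ) < 2 * C * P := by positivity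
    have hε4 : ε ^ 4 ≤ ε := by
      calc ε ^ 4 ≤ ε ^ 1 := pow_le_pow_of_le_one hε.le hε1 (by norm_num)
        _ = ε := pow_one ε
    have h : ε * (2*C*P) ≤ 1 := by
      rw [le_div_iff₀ h2CP] at hε2
      exact hε2
    nlinarith
  -- the weight function (as explicit exponentials)
  have hmE : ∀ A : ℝ, A₀ ≤ A → m ≤ Real.exp (-(lam * A ^ (-(1:ℝ)/6))) := by
    intro A hA
    have h1 : A ^ (-(1:ℝ)/6) ≤ A₀ ^ (-(1:ℝ)/6) :=
      rpow_le_rpow_of_nonpos hA₀ hA (by norm_num)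
    rw [hm_def]
    apply exp_le_exp.mpr
    have h2 := mul_le_mul_of_nonneg_left h1 hlam.le
    have h3 : lam * A₀ ^ (-(1:ℝ)/6) ≤ lam * r * A₀ ^ (-(1:ℝ)/6) := by
      nlinarith [mul_nonneg (mul_nonneg hlam.le ht0.le) hcr.le]
    linarith
  have hE1 : ∀ A : ℝ, A₀ ≤ A → Real.exp (-(lam * A ^ (-(1:ℝ)/6))) ≤ 1 := by
    intro A hA
    have hApos : 0 < A := lt_of_lt_of_le hA₀ hA
    have : 0 ≤ lam * A ^ (-(1:ℝ)/6) := by positivity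
    exact exp_le_one_iff.mpr (by linarith)
  -- base case
  have hBase : ∀ A : ℝ, A₀ ≤ A → A ≤ 32 * A₀ →
      S A ≤ C' * A ^ (-σ) * Real.exp (-(lam * A ^ (-(1:ℝ)/6))) := by
    intro A hA1 hA2
    have hApos : 0 < A := lt_of_lt_of_le hA₀ hA1
    have h1 : (32*A₀) ^ (-σ) ≤ A ^ (-σ) :=
      rpow_le_rpow_of_nonpos hApos hA2 (by linarith)
    have h2 : (0:ℝ) < (32*A₀) ^ (-σ) := rpow_pos_of_pos h32A₀ _
    have h3 : (32*A₀) ^ σ * (32*A₀) ^ (-σ) = 1 := by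
      rw [← rpow_add h32A₀]; simp
    have h4 : m ≤ Real.exp (-(lam * A ^ (-(1:ℝ)/6))) := hmE A hA1
    have hEApos : (0:ℝ) < Real.exp (-(lam * A ^ (-(1:ℝ)/6))) := exp_pos _
    calc S A ≤ ε := hbase A hA1 hA2
      _ ≤ 1 := hε1
      _ = (32*A₀) ^ σ * (32*A₀) ^ (-σ) := h3.symm
      _ ≤ ((32*A₀) ^ σ + 2*C) * (32*A₀) ^ (-σ) := by nlinarith
      _ = C' * m * (32*A₀) ^ (-σ) := by rw [hC'm]
      _ ≤ C' * Real.exp (-(lam * A ^ (-(1:ℝ)/6))) * (32*A₀) ^ (-σ) := by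
          apply mul_le_mul_of_nonneg_right _ h2.le
          exact mul_le_mul_of_nonneg_left h4 hC'.le
      _ ≤ C' * Real.exp (-(lam * A ^ (-(1:ℝ)/6))) * A ^ (-σ) := by
          apply mul_le_mul_of_nonneg_left h1 (by positivity)
      _ = C' * A ^ (-σ) * Real.exp (-(lam * A ^ (-(1:ℝ)/6))) := by ring
  -- main induction
  have key : ∀ n : ℕ, ∀ A : ℝ, A₀ ≤ A → A ≤ 32 ^ n * (32 * A₀) →
      S A ≤ C' * A ^ (-σ) * Real.exp (-(lam * A ^ (-(1:ℝ)/6))) := by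
    intro n
    induction n with
    | zero => intro A hA1 hA2; exact hBase A hA1 (by rw [pow_zero, one_mul] at hA2; exact hA2)
    | succ n ih =>
      intro A hA1 hA2
      rcases le_or_gt A (32 * A₀) with hcs | hcs
      · exact hBase A hA1 hcs
      · have hApos : 0 < A := lt_of_lt_of_le hA₀ hA1
        have hB1 : A₀ ≤ A / 32 := by linarith
        have hB2 : A / 32 ≤ 32 ^ n * (32 * A₀) := by
          rw [pow_succ] at hA2; nlinarith [pow_pos (by norm_num : (0:ℝ) < 32) n]
        have hIH := ih (A/32) hB1 hB2
        set s : ℝ := A ^ (-σ) with hs_def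
        set t : ℝ := A ^ (-(1:ℝ)/6) with ht_def
        have hs : 0 < s := rpow_pos_of_pos hApos _
        have ht : 0 < t := rpow_pos_of_pos hApos _
        have hBσ : (A/32) ^ (-σ) = s * P := by
          rw [hs_def, hP_def, div_rpow hApos.le (by norm_num : (0:ℝ) ≤ 32),
            rpow_neg (by norm_num : (0:ℝ) ≤ 32) σ, div_inv_eq_mul]
        have hBt : (A/32) ^ (-(1:ℝ)/6) = t * r := by
          rw [ht_def, hr_def, div_rpow hApos.le (by norm_num : (0:ℝ) ≤ 32),
            show (-(1:ℝ)/6) = -((1:ℝ)/6) by norm_num,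
            rpow_neg (by norm_num : (0:ℝ) ≤ 32) ((1:ℝ)/6), div_inv_eq_mul]
        rw [hBσ, hBt] at hIH
        set X : ℝ := Real.exp (-(lam * (t * r))) with hX_def
        have hX : 0 < X := exp_pos _
        -- key exponential inequality
        have hEA : X * (1 + C * P * K * t) ≤ Real.exp (-(lam * t)) := by
          have hsplit : Real.exp (-(lam * t)) = X * Real.exp (lam * (r - 1) * t) := by
            rw [hX_def, ← Real.exp_add]
            congr 1
            ring
          rw [hsplit]
          have h1 : 1 + lam * (r-1) * t ≤ Real.exp (lam * (r-1) * t) := by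
            have := Real.add_one_le_exp (lam * (r-1) * t); linarith
          have h2 : lam * (r - 1) = C * P * K := by
            rw [hlam_def]; field_simp
          have h3 : 1 + C * P * K * t ≤ Real.exp (lam * (r-1) * t) := by
            rw [← h2]; nlinarith [h2]
          exact mul_le_mul_of_nonneg_left h3 hX.le
        have hCX : 2 * C ≤ C' * X := by
          have hmX : m ≤ X := by
            rw [hm_def, hX_def]
            apply exp_le_exp.mpr
            have h1 : t ≤ A₀ ^ (-(1:ℝ)/6) :=
              rpow_le_rpow_of_nonpos hA₀ hA1 (by norm_num)
            have := mul_le_mul_of_nonneg_left h1 (by positivity : (0:ℝ) ≤ lam * r)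
            nlinarith
          have := mul_le_mul_of_nonneg_left hmX hC'.le
          rw [hC'm] at this
          nlinarith
        have hrecA := hrec A (by linarith)
        rw [← hs_def, ← ht_def] at hrecA
        exact bootstrap_arith C K P C' s t X _ (S (A/32)) (S A) ε hC hK hP hC' hs ht hX
          (hS0 _ hB1) hrecA hIH hεP hCX hEA
  -- conclude
  intro A hA
  obtain ⟨n, hn⟩ := pow_unbounded_of_one_lt (A / (32*A₀)) (by norm_num : (1:ℝ) < 32)
  have hAn : A ≤ 32 ^ n * (32 * A₀) := by
    rw [div_lt_iff₀ h32A₀] at hn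
    nlinarith
  have h1 := key n A hA hAn
  have h2 := hE1 A hA
  have hs : (0:ℝ) < A ^ (-σ) := rpow_pos_of_pos (lt_of_lt_of_le hA₀ hA) _
  have h3 : C' * A ^ (-σ) * Real.exp (-(lam * A ^ (-(1:ℝ)/6))) ≤ C' * A ^ (-σ) * 1 :=
    mul_le_mul_of_nonneg_left h2 (by positivity)
  rw [mul_one] at h3
  linarith
end
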